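/- Let c > 0, χ > 0, ε₀ > 0, and let 𝐄, 𝐁, 𝐉 : ℝ × ℝ³ → ℝ³, φ : ℝ × ℝ³ → ℝ, σ : ℝ × ℝ³ → ℝ be four times continuously differentiable. Suppose the corrected Ampère equation ∂ₜ𝐄 − c²∇×𝐁 + χc²∇φ = −𝐉/ε₀, the correction-potential equation ∂ₜφ + χ(∇·𝐄 − σ/ε₀) = 0, and charge conservation ∂ₜσ + ∇·𝐉 = 0 hold everywhere. Then the Gauss-law constraint error g := ∇·𝐄 − σ/ε₀ satisfies the wave equation ∂ₜ²g = χ²c² Δg, i.e., the error in the constraint ∇·𝐄 = σ/ε₀ propagates with speed cχ. -/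

import Mathlib

/-!
Write `g = ∇·𝐄 − σ/ε₀`. Taking the divergence of the Ampère equation kills the curl term
(`∇·∇×𝐁 = 0`), and charge conservation cancels the current term against `∂ₜσ/ε₀`, so
`∂ₜg = −χc²Δφ`. Differentiating once more in time, commuting `∂ₜ` with `Δ` (symmetry of second
derivatives) and substituting the cleaning equation `∂ₜφ = −χg` gives `∂ₜ²g = χ²c²Δg`.
-/

noncomputable section

/-- The `i`-th standard basis vector of `ℝ³ = Fin 3 → ℝ`. -/
def sb (i : Fin 3) : Fin 3 → ℝ := Pi.single i 1

/-- Partial derivative in time (the first, `ℝ`, argument). -/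
def pt3 {E : Type*} [NormedAddCommGroup E] [NormedSpace ℝ E]
    (f : ℝ × (Fin 3 → ℝ) → E) (p : ℝ × (Fin 3 → ℝ)) : E :=
  fderiv ℝ f p (1, 0)

/-- Spatial partial derivative in the `i`-th coordinate direction. -/
def pd3 {E : Type*} [NormedAddCommGroup E] [NormedSpace ℝ E]
    (i : Fin 3) (f : ℝ × (Fin 3 → ℝ) → E) (p : ℝ × (Fin 3 → ℝ)) : E :=
  fderiv ℝ f p (0, sb i)

/-- Spatial divergence of a vector field. -/
def div3 (F : ℝ × (Fin 3 → ℝ) → (Fin 3 → ℝ)) (p : ℝ × (Fin 3 → ℝ)) : ℝ :=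
  ∑ i, pd3 i (fun q => F q i) p

/-- Spatial curl of a vector field. -/
def curl3 (F : ℝ × (Fin 3 → ℝ) → (Fin 3 → ℝ)) (p : ℝ × (Fin 3 → ℝ)) : Fin 3 → ℝ :=
  ![pd3 1 (fun q => F q 2) p - pd3 2 (fun q => F q 1) p,
    pd3 2 (fun q => F q 0) p - pd3 0 (fun q => F q 2) p,
    pd3 0 (fun q => F q 1) p - pd3 1 (fun q => F q 0) p]

/-- Spatial gradient of a scalar field. -/
def grad3 (f : ℝ × (Fin 3 → ℝ) → ℝ) (p : ℝ × (Fin 3 → ℝ)) : Fin 3 → ℝ :=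
  fun i => pd3 i f p

/-- Spatial Laplacian of a scalar field. -/
def lap3 (f : ℝ × (Fin 3 → ℝ) → ℝ) (p : ℝ × (Fin 3 → ℝ)) : ℝ :=
  ∑ i, pd3 i (fun q => pd3 i f q) p

section DirectionalDerivative

variable {X F : Type*} [NormedAddCommGroup X] [NormedSpace ℝ X]
  [NormedAddCommGroup F] [NormedSpace ℝ F]

theorem fderiv_fderiv_apply_comm {f : X → F} {p : X} (hf : ContDiffAt ℝ 2 f p) (u v : X) :
    fderiv ℝ (fun q => fderiv ℝ f q v) p u = fderiv ℝ (fun q => fderiv ℝ f q u) p v := by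
  have hdf : DifferentiableAt ℝ (fderiv ℝ f) p :=
    (hf.fderiv_right (m := 1) le_rfl).differentiableAt one_ne_zero
  have happly : ∀ w : X,
      fderiv ℝ (fun q => fderiv ℝ f q w) p = (fderiv ℝ (fderiv ℝ f) p).flip w :=
    fun w => by simp [fderiv_clm_apply hdf (differentiableAt_const w)]
  simpa [happly] using (hf.isSymmSndFDerivAt (by simp)).eq u v

end DirectionalDerivative

section SpaceTime

variable {F : Type*} [NormedAddCommGroup F] [NormedSpace ℝ F]
  {f g : ℝ × (Fin 3 → ℝ) → F} {p : ℝ × (Fin 3 → ℝ)}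

theorem contDiff_pd3 {m n : WithTop ℕ∞} (hf : ContDiff ℝ n f)
    (hmn : m + 1 ≤ n) (i : Fin 3) : ContDiff ℝ m (pd3 i f) :=
  (hf.fderiv_right hmn).clm_apply contDiff_const

theorem pt3_pd3_comm (hf : ContDiff ℝ 2 f) (i : Fin 3) (p : ℝ × (Fin 3 → ℝ)) :
    pt3 (pd3 i f) p = pd3 i (pt3 f) p :=
  fderiv_fderiv_apply_comm hf.contDiffAt _ _

theorem pd3_pd3_comm (hf : ContDiff ℝ 2 f) (i j : Fin 3) (p : ℝ × (Fin 3 → ℝ)) :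
    pd3 i (pd3 j f) p = pd3 j (pd3 i f) p :=
  fderiv_fderiv_apply_comm hf.contDiffAt _ _

theorem pt3_const_smul (a : ℝ) :
    pt3 (fun q => a • f q) p = a • pt3 f p := by
  simp [pt3, ← Pi.smul_def, fderiv_const_smul_field]

theorem pd3_const_smul (a : ℝ) (i : Fin 3) :
    pd3 i (fun q => a • f q) p = a • pd3 i f p := by
  simp [pd3, ← Pi.smul_def, fderiv_const_smul_field]

theorem pt3_div_const {f : ℝ × (Fin 3 → ℝ) → ℝ} (a : ℝ) :
    pt3 (fun q => f q / a) p = pt3 f p / a := by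
  simpa only [smul_eq_mul, div_eq_inv_mul] using pt3_const_smul (f := f) (p := p) a⁻¹

theorem pd3_sub (hf : DifferentiableAt ℝ f p) (hg : DifferentiableAt ℝ g p) (i : Fin 3) :
    pd3 i (fun q => f q - g q) p = pd3 i f p - pd3 i g p := by
  simp [pd3, fderiv_fun_sub hf hg]

theorem pt3_sub (hf : DifferentiableAt ℝ f p) (hg : DifferentiableAt ℝ g p) :
    pt3 (fun q => f q - g q) p = pt3 f p - pt3 g p := by
  simp [pt3, fderiv_fun_sub hf hg]

theorem pt3_sum {ι : Type*} {s : Finset ι} {f : ι → ℝ × (Fin 3 → ℝ) → F}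
    (hf : ∀ i ∈ s, DifferentiableAt ℝ (f i) p) :
    pt3 (fun q => ∑ i ∈ s, f i q) p = ∑ i ∈ s, pt3 (f i) p := by
  simp [pt3, fderiv_fun_sum hf]

theorem pt3_apply {ι : Type*} [Fintype ι] {f : ℝ × (Fin 3 → ℝ) → ι → ℝ}
    (hf : DifferentiableAt ℝ f p) (j : ι) :
    pt3 (fun q => f q j) p = pt3 f p j := by
  simp [pt3, fderiv_apply hf]

end SpaceTime

section VectorCalculus

variable {F G : ℝ × (Fin 3 → ℝ) → (Fin 3 → ℝ)} {f : ℝ × (Fin 3 → ℝ) → ℝ} {p : ℝ × (Fin 3 → ℝ)}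

theorem div3_grad3 : div3 (grad3 f) = lap3 f := rfl

theorem div3_const_smul (a : ℝ) :
    div3 (fun q => a • F q) p = a * div3 F p := by
  simp only [div3, Pi.smul_apply, pd3_const_smul]
  simp only [smul_eq_mul, Finset.mul_sum]

theorem div3_sub (hF : DifferentiableAt ℝ F p) (hG : DifferentiableAt ℝ G p) :
    div3 (fun q => F q - G q) p = div3 F p - div3 G p := by
  simp only [div3, Pi.sub_apply, ← Finset.sum_sub_distrib]
  exact Finset.sum_congr rfl fun i _ =>
    pd3_sub (differentiableAt_pi.1 hF i) (differentiableAt_pi.1 hG i) i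

theorem lap3_const_mul (a : ℝ) :
    lap3 (fun q => a * f q) p = a * lap3 f p := by
  simp only [lap3, ← smul_eq_mul, pd3_const_smul, Finset.smul_sum]

theorem contDiff_curl3 {m n : WithTop ℕ∞} (hF : ContDiff ℝ n F) (hmn : m + 1 ≤ n) :
    ContDiff ℝ m (curl3 F) := by
  have hpd : ∀ i j, ContDiff ℝ m (pd3 j fun q => F q i) := fun i j =>
    contDiff_pd3 (contDiff_pi.1 hF i) hmn j
  refine contDiff_pi.2 fun i => ?_
  fin_cases i
  · exact (hpd 2 1).sub (hpd 1 2)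
  · exact (hpd 0 2).sub (hpd 2 0)
  · exact (hpd 1 0).sub (hpd 0 1)

theorem contDiff_grad3 {m n : WithTop ℕ∞} (hf : ContDiff ℝ n f) (hmn : m + 1 ≤ n) :
    ContDiff ℝ m (grad3 f) :=
  contDiff_pi.2 (contDiff_pd3 hf hmn)

theorem contDiff_div3 {m n : WithTop ℕ∞} (hF : ContDiff ℝ n F) (hmn : m + 1 ≤ n) :
    ContDiff ℝ m (div3 F) :=
  ContDiff.sum fun i _ => contDiff_pd3 (contDiff_pi.1 hF i) hmn i

theorem div3_curl3 (hF : ContDiff ℝ 2 F) (p : ℝ × (Fin 3 → ℝ)) : div3 (curl3 F) p = 0 := by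
  have hpd : ∀ i j, DifferentiableAt ℝ (pd3 j fun q => F q i) p := fun i j =>
    (contDiff_pd3 (m := 1) (contDiff_pi.1 hF i) (by norm_num) j).differentiable one_ne_zero p
  have hcomm : ∀ i j k, pd3 j (pd3 k fun q => F q i) p = pd3 k (pd3 j fun q => F q i) p :=
    fun i j k => pd3_pd3_comm (contDiff_pi.1 hF i) j k p
  simp only [div3, Fin.sum_univ_three, curl3, Matrix.cons_val_zero, Matrix.cons_val_one,
    Matrix.cons_val_two, Matrix.tail_cons, Matrix.head_cons]
  rw [pd3_sub (hpd 2 1) (hpd 1 2), pd3_sub (hpd 0 2) (hpd 2 0), pd3_sub (hpd 1 0) (hpd 0 1),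
    hcomm 2 0 1, hcomm 1 0 2, hcomm 0 1 2]
  ring

theorem pt3_div3 (hF : ContDiff ℝ 2 F) (p : ℝ × (Fin 3 → ℝ)) :
    pt3 (div3 F) p = div3 (pt3 F) p := by
  have hcomp : ∀ i, ContDiff ℝ 2 fun q => F q i := contDiff_pi.1 hF
  have hpt : ∀ i, pt3 (fun q => F q i) = fun q => pt3 F q i := fun i =>
    funext fun q => pt3_apply (hF.differentiable two_ne_zero q) i
  show pt3 (fun q => ∑ i, pd3 i (fun r => F r i) q) p = ∑ i, pd3 i (fun q => pt3 F q i) p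
  rw [pt3_sum fun i _ =>
    (contDiff_pd3 (m := 1) (hcomp i) (by norm_num) i).differentiable one_ne_zero p]
  exact Finset.sum_congr rfl fun i _ => by rw [pt3_pd3_comm (hcomp i), hpt i]

theorem pt3_lap3 (hf : ContDiff ℝ 3 f) (p : ℝ × (Fin 3 → ℝ)) :
    pt3 (lap3 f) p = lap3 (pt3 f) p := by
  have hpt : ∀ i, pt3 (pd3 i f) = pd3 i (pt3 f) := fun i =>
    funext (pt3_pd3_comm (hf.of_le (by norm_num)) i)
  show pt3 (fun q => ∑ i, pd3 i (pd3 i f) q) p = ∑ i, pd3 i (pd3 i (pt3 f)) p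
  rw [pt3_sum fun i _ => (contDiff_pd3 (m := 1)
    (contDiff_pd3 (m := 2) hf (by norm_num) i) (by norm_num) i).differentiable one_ne_zero p]
  exact Finset.sum_congr rfl fun i _ => by
    rw [pt3_pd3_comm (contDiff_pd3 hf (by norm_num) i), hpt i]

end VectorCalculus

theorem gauss_law_constraint_error_wave_equation_general
    (c χ ε₀ : ℝ)
    (E B J : ℝ × (Fin 3 → ℝ) → (Fin 3 → ℝ)) (φ σ : ℝ × (Fin 3 → ℝ) → ℝ)
    (hE : ContDiff ℝ 4 E) (hB : ContDiff ℝ 4 B) (hJ : ContDiff ℝ 4 J)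
    (hφ : ContDiff ℝ 4 φ) (hσ : ContDiff ℝ 4 σ)
    (ampere : ∀ p, pt3 E p - c ^ 2 • curl3 B p + (χ * c ^ 2) • grad3 φ p
      = -(ε₀⁻¹ • J p))
    (cleaning : ∀ p, pt3 φ p + χ * (div3 E p - σ p / ε₀) = 0)
    (charge : ∀ p, pt3 σ p + div3 J p = 0) :
    ∀ p, pt3 (fun q => pt3 (fun r => div3 E r - σ r / ε₀) q) p
      = χ ^ 2 * c ^ 2 * lap3 (fun q => div3 E q - σ q / ε₀) p := by
  set g := fun q => div3 E q - σ q / ε₀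
  have hE_t (q) : pt3 E q = c ^ 2 • curl3 B q - (χ * c ^ 2) • grad3 φ q - ε₀⁻¹ • J q := by
    linear_combination (norm := module) ampere q
  have hdivE_t (q) : pt3 (div3 E) q = -(χ * c ^ 2) * lap3 φ q - ε₀⁻¹ * div3 J q := by
    have hcurl := (contDiff_curl3 (m := 1) hB (by norm_num)).differentiable one_ne_zero q
    have hgrad := (contDiff_grad3 (m := 1) hφ (by norm_num)).differentiable one_ne_zero q
    have hJq := hJ.differentiable (by norm_num) q
    rw [pt3_div3 (hE.of_le (by norm_num)), funext hE_t,
      div3_sub ((hcurl.fun_const_smul _).fun_sub (hgrad.fun_const_smul _)) (hJq.fun_const_smul _),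
      div3_sub (hcurl.fun_const_smul _) (hgrad.fun_const_smul _), div3_const_smul,
      div3_const_smul, div3_const_smul, div3_curl3 (hB.of_le (by norm_num)), div3_grad3]
    ring
  have hg_t (q) : pt3 g q = -(χ * c ^ 2) * lap3 φ q := by
    rw [pt3_sub ((contDiff_div3 (m := 1) hE (by norm_num)).differentiable one_ne_zero q)
        ((hσ.div_const ε₀).differentiable (by norm_num) q), pt3_div_const, hdivE_t]
    linear_combination -ε₀⁻¹ * charge q
  have hφ_t : pt3 φ = fun q => -χ * g q := funext fun q => by linear_combination cleaning q
  intro p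
  calc pt3 (pt3 g) p = -(χ * c ^ 2) * pt3 (lap3 φ) p := by
        rw [funext hg_t]; exact pt3_const_smul _
    _ = -(χ * c ^ 2) * lap3 (pt3 φ) p := by rw [pt3_lap3 (hφ.of_le (by norm_num))]
    _ = χ ^ 2 * c ^ 2 * lap3 g p := by rw [hφ_t, lap3_const_mul]; ring

/-- **Wave equation for the Gauss-law constraint error.**
If the corrected Ampère equation `∂ₜ𝐄 − c²∇×𝐁 + χc²∇φ = −𝐉/ε₀`, the
correction-potential equation `∂ₜφ + χ(∇·𝐄 − σ/ε₀) = 0`, and charge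
conservation `∂ₜσ + ∇·𝐉 = 0` hold everywhere, then the Gauss-law constraint
error `g := ∇·𝐄 − σ/ε₀` satisfies `∂ₜ²g = χ²c² Δg`, i.e. the error in the
constraint `∇·𝐄 = σ/ε₀` propagates with speed `cχ`. -/
theorem gauss_law_constraint_error_wave_equation
    (c χ ε₀ : ℝ) (hc : 0 < c) (hχ : 0 < χ) (hε₀ : 0 < ε₀)
    (E B J : ℝ × (Fin 3 → ℝ) → (Fin 3 → ℝ)) (φ σ : ℝ × (Fin 3 → ℝ) → ℝ)
    (hE : ContDiff ℝ 4 E) (hB : ContDiff ℝ 4 B) (hJ : ContDiff ℝ 4 J)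
    (hφ : ContDiff ℝ 4 φ) (hσ : ContDiff ℝ 4 σ)
    (ampere : ∀ p, pt3 E p - c ^ 2 • curl3 B p + (χ * c ^ 2) • grad3 φ p
      = -(ε₀⁻¹ • J p))
    (cleaning : ∀ p, pt3 φ p + χ * (div3 E p - σ p / ε₀) = 0)
    (charge : ∀ p, pt3 σ p + div3 J p = 0) :
    ∀ p, pt3 (fun q => pt3 (fun r => div3 E r - σ r / ε₀) q) p
      = χ ^ 2 * c ^ 2 * lap3 (fun q => div3 E q - σ q / ε₀) p :=
  gauss_law_constraint_error_wave_equation_general c χ ε₀ E B J φ σ hE hB hJ hφ hσ ampere cleaning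
    charge
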